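/- Let (x, ξ) ∈ ℝ⁴ × (ℝ⁴ \ {0}) and let C(x,ξ) be defined from the point–line relation Z'. Then: (1) if ξ is timelike, C(x,ξ) = ∅; (2) if ξ is spacelike, C(x,ξ) = {(x' − x⁰ v, v, ξ', x⁰(ξ' − (ξ'·v) v)) : v ∈ S¹_ξ}; (3) if ξ is lightlike (then ξ₀ ≠ 0), C(x,ξ) consists of the single point (x' + (x⁰/ξ₀) ξ', −ξ'/ξ₀, ξ', 0). -/

import Mathlib

open MeasureTheory
open scoped Real

noncomputable section

/-- Euclidean `ℝ³`. -/
abbrev E3 := EuclideanSpace ℝ (Fin 3)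

/-- Minkowski space `ℝ⁴ = ℝ × ℝ³`, points written `x = (x⁰, x')`. -/
abbrev M4 := ℝ × E3

/-- The unit sphere `S² ⊆ ℝ³`. -/
def sphere2 : Set E3 := Metric.sphere 0 1

/-- The lightlike direction `θ = (1, v) ∈ ℝ⁴` as a 4-vector of components. -/
def thvec (v : E3) : Fin 4 → ℝ := Fin.cons 1 (fun i => v i)

/-- The components `(ξ₀, ξ')` of a covector as a 4-vector. -/
def xiVec (ξ : M4) : Fin 4 → ℝ := Fin.cons ξ.1 (fun i => ξ.2 i)

/-- The Minkowski metric `η = diag(-1,1,1,1)` (its own inverse). -/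
def eta4 : Fin 4 → Fin 4 → ℝ := fun i j => if i = j then (if i = 0 then -1 else 1) else 0

/-- The circle `S¹_ξ = {v ∈ S² : ξ₀ + ξ'·v = 0}`. -/
def S1xi (ξ : M4) : Set E3 := {v | ‖v‖ = 1 ∧ ξ.1 + (inner ℝ ξ.2 v : ℝ) = 0}

/-- `C(x,ξ)`: the set of `(y, v, η, w)` in relation `Z'` with `(x, ξ)`, i.e. `v ∈ S²`,
`y = x' − x⁰v`, `η = ξ'`, `w = x⁰(ξ' − (ξ'·v)v)` and `ξ₀ = −ξ'·v`. -/
def Crel (x ξ : M4) : Set (E3 × E3 × E3 × E3) :=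
  {q | ‖q.2.1‖ = 1 ∧
    q.1 = x.2 - x.1 • q.2.1 ∧
    q.2.2.1 = ξ.2 ∧
    q.2.2.2 = x.1 • (ξ.2 - (inner ℝ ξ.2 q.2.1 : ℝ) • q.2.1) ∧
    ξ.1 = -(inner ℝ ξ.2 q.2.1 : ℝ)}


/-!
An element of `C(x,ξ)` is determined by its direction `v`, and the relation forces `v ∈ S¹_ξ`;
so, whatever the type of `ξ`, `C(x,ξ)` is the image of `S¹_ξ` under
`v ↦ (x' − x⁰v, v, ξ', x⁰(ξ' − (ξ'·v)v))`. By Cauchy–Schwarz `|ξ'·v| ≤ |ξ'|` on `S²`, so `S¹_ξ` is empty when `ξ` is timelike. When `ξ` is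
lightlike, `ξ'·v = −ξ₀` is the equality case of Cauchy–Schwarz, which pins `v` down to `−ξ'/ξ₀`.
-/

open scoped RealInnerProductSpace

section InnerProductSpace

variable {F : Type*} [NormedAddCommGroup F] [InnerProductSpace ℝ F]

theorem add_inner_ne_zero_of_norm_lt_abs {a v : F} {c : ℝ} (hv : ‖v‖ = 1) (h : ‖a‖ < |c|) :
    c + ⟪a, v⟫ ≠ 0 := by
  intro hcv
  have hcs := abs_real_inner_le_norm a v
  rw [hv, mul_one, show ⟪a, v⟫ = -c by linarith, abs_neg] at hcs
  linarith

theorem eq_neg_inv_smul_of_add_inner_eq_zero {a v : F} {c : ℝ} (hv : ‖v‖ = 1)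
    (hc : |c| = ‖a‖) (hc0 : c ≠ 0) (hcv : c + ⟪a, v⟫ = 0) : v = -c⁻¹ • a := by
  -- `‖v + c⁻¹a‖² = 1 + 2c⁻¹⟪a, v⟫ + c⁻²‖a‖² = 1 − 2 + 1`
  have hsq : ‖v + c⁻¹ • a‖ ^ 2 = 0 := by
    rw [norm_add_sq_real, real_inner_smul_right, real_inner_comm, norm_smul, mul_pow,
      Real.norm_eq_abs, abs_inv, hc, hv, show ⟪a, v⟫ = -c by linarith, ← hc, sq_abs]
    field_simp
    rw [sq_abs]
    ring
  rw [neg_smul, eq_neg_iff_add_eq_zero]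
  exact norm_eq_zero.mp (pow_eq_zero_iff two_ne_zero |>.mp hsq)

theorem norm_neg_inv_smul_of_abs_eq {a : F} {c : ℝ} (hc : |c| = ‖a‖) (hc0 : c ≠ 0) :
    ‖-c⁻¹ • a‖ = 1 := by
  rw [norm_smul, norm_neg, norm_inv, Real.norm_eq_abs, hc,
    inv_mul_cancel₀ (hc ▸ abs_ne_zero.mpr hc0)]

theorem add_inner_neg_inv_smul_of_abs_eq {a : F} {c : ℝ} (hc : |c| = ‖a‖) :
    c + ⟪a, -c⁻¹ • a⟫ = 0 := by
  rw [real_inner_smul_right, real_inner_self_eq_norm_sq, ← hc, sq_abs]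
  field_simp
  ring

end InnerProductSpace

theorem Prod.fst_ne_zero_of_abs_eq_norm {F : Type*} [NormedAddCommGroup F] {ξ : ℝ × F}
    (hξ : ξ ≠ 0) (h : |ξ.1| = ‖ξ.2‖) : ξ.1 ≠ 0 := by
  intro h0
  rw [h0, abs_zero, eq_comm, norm_eq_zero] at h
  exact hξ (Prod.ext h0 h)

theorem S1xi_eq_empty_of_norm_lt_abs {ξ : M4} (h : ‖ξ.2‖ < |ξ.1|) : S1xi ξ = ∅ :=
  Set.eq_empty_of_forall_notMem fun _ ⟨hv, hcv⟩ => add_inner_ne_zero_of_norm_lt_abs hv h hcv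

theorem S1xi_eq_singleton_of_abs_eq_norm {ξ : M4} (h : |ξ.1| = ‖ξ.2‖) (h0 : ξ.1 ≠ 0) :
    S1xi ξ = {-(ξ.1)⁻¹ • ξ.2} := by
  ext v
  refine ⟨fun ⟨hv, hcv⟩ => eq_neg_inv_smul_of_add_inner_eq_zero hv h h0 hcv, ?_⟩
  rintro rfl
  exact ⟨norm_neg_inv_smul_of_abs_eq h h0, add_inner_neg_inv_smul_of_abs_eq h⟩

theorem Crel_eq_image_S1xi (x ξ : M4) :
    Crel x ξ = (fun v => (x.2 - x.1 • v, v, ξ.2, x.1 • (ξ.2 - ⟪ξ.2, v⟫ • v))) '' S1xi ξ := by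
  ext ⟨y, v, η, w⟩
  constructor
  · rintro ⟨hv, hy, hη, hw, hξv⟩
    dsimp only at hv hy hη hw hξv
    subst hy hη hw
    exact ⟨v, ⟨hv, by linarith⟩, rfl⟩
  · rintro ⟨v, ⟨hv, hξv⟩, ⟨⟩⟩
    exact ⟨hv, rfl, rfl, rfl, by linarith⟩

/-- Description of `C(x,ξ)`: empty for timelike `ξ`, the image of the
circle `S¹_ξ` for spacelike `ξ`, and a single point for lightlike `ξ` (where `ξ₀ ≠ 0`). -/
theorem Crel_characterization (x ξ : M4) (hξ : ξ ≠ 0) :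
    (‖ξ.2‖ < |ξ.1| → Crel x ξ = ∅) ∧
    (|ξ.1| < ‖ξ.2‖ → Crel x ξ =
      (fun v => (x.2 - x.1 • v, v, ξ.2, x.1 • (ξ.2 - (inner ℝ ξ.2 v : ℝ) • v))) '' S1xi ξ) ∧
    (|ξ.1| = ‖ξ.2‖ → ξ.1 ≠ 0 ∧
      Crel x ξ = {(x.2 + (x.1 / ξ.1) • ξ.2, -(ξ.1)⁻¹ • ξ.2, ξ.2, (0 : E3))}) := by
  refine ⟨fun h => ?_, fun _ => Crel_eq_image_S1xi x ξ, fun h => ?_⟩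
  · rw [Crel_eq_image_S1xi, S1xi_eq_empty_of_norm_lt_abs h, Set.image_empty]
  have h0 := Prod.fst_ne_zero_of_abs_eq_norm hξ h
  have hinner : ⟪ξ.2, -(ξ.1)⁻¹ • ξ.2⟫ = -ξ.1 := by
    linarith [add_inner_neg_inv_smul_of_abs_eq h]
  refine ⟨h0, ?_⟩
  rw [Crel_eq_image_S1xi, S1xi_eq_singleton_of_abs_eq_norm h h0, Set.image_singleton, hinner,
    smul_smul (-ξ.1), neg_mul_neg, mul_inv_cancel₀ h0, one_smul, sub_self, smul_zero]
  congr 2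
  rw [smul_smul, div_eq_mul_inv, mul_neg, neg_smul, sub_neg_eq_add]
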